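/- Let P = {x ∈ ℝ² : Ax ≤ b} be a convex polygon with nonempty interior, where every row A_i of A ∈ ℝ^{m×2} has unit norm and every row defines an edge of P, let r = I(P), and for i ∈ [m] let M_i = max { t ≥ 0 : ∃ x with Ax ≤ b − t·(1,…,1) and A_i·x = b_i − t }. Then for every t with 0 ≤ t < r there exists i ∈ [m] such that M_i ≥ t and width(interior_t(P)) = width_{A_i}(interior_t(P)). -/

import Mathlib

open Metric Set
open scoped RealInnerProductSpace

/-- The directional width of a set `K` in direction `v`. -/
noncomputable def dirWidth (v : EuclideanSpace ℝ (Fin 2))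
    (K : Set (EuclideanSpace ℝ (Fin 2))) : ℝ :=
  sSup ((fun x => ⟪v, x⟫) '' K) - sInf ((fun x => ⟪v, x⟫) '' K)

/-- The width of `K`: the minimum directional width over all unit directions. -/
noncomputable def setWidth (K : Set (EuclideanSpace ℝ (Fin 2))) : ℝ :=
  sInf {w | ∃ v : EuclideanSpace ℝ (Fin 2), ‖v‖ = 1 ∧ w = dirWidth v K}

/-- The inner parallel body of `P` at distance `t`. -/
def innerParallel (P : Set (EuclideanSpace ℝ (Fin 2))) (t : ℝ) :
    Set (EuclideanSpace ℝ (Fin 2)) :=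
  {x ∈ P | closedBall x t ⊆ P}

/-- The inradius of `P`. -/
noncomputable def inradius (P : Set (EuclideanSpace ℝ (Fin 2))) : ℝ :=
  sSup {r : ℝ | ∃ x, closedBall x r ⊆ P}

/-!
The inner parallel body of `P = {x | Ax ≤ b}` at distance `t` is the polygon `K = {x | Ax ≤ b - t}`
with the same rows. Let `v` be a unit direction minimizing the width of `K`, and `p`, `q` points of
`K` maximizing and minimizing `⟪v, ·⟫`. If one of these two supporting lines meets `K` in a segment,
that segment is an edge of `K` whose outer normal is a row `A i = ±v`; the constraint `i` is then
active on `K`, which is exactly `t ≤ M i`. Otherwise `p` and `q` are vertices with `v` and `-v` in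
the interiors of their normal cones, so for `u` near `v` the width in direction `u` is the linear
function `⟪u, p - q⟫`; rotating `v` slightly decreases it, contradicting minimality.
-/

open Filter Topology Module

section Polyhedron

variable {E : Type*} [NormedAddCommGroup E] [InnerProductSpace ℝ E] {ι : Type*}

def polyhedron (A : ι → E) (c : ι → ℝ) : Set E := {x | ∀ j, ⟪A j, x⟫ ≤ c j}

variable {A : ι → E} {c : ι → ℝ}

@[simp]
lemma mem_polyhedron {x : E} : x ∈ polyhedron A c ↔ ∀ j, ⟪A j, x⟫ ≤ c j := Iff.rfl

lemma isClosed_polyhedron (A : ι → E) (c : ι → ℝ) : IsClosed (polyhedron A c) := by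
  simp only [polyhedron, ofPred_forall]
  exact isClosed_iInter fun j => isClosed_le (continuous_const.inner continuous_id) continuous_const

lemma polyhedron_mono {c' : ι → ℝ} (h : ∀ j, c j ≤ c' j) : polyhedron A c ⊆ polyhedron A c' :=
  fun _ hx j => (hx j).trans (h j)

lemma closedBall_subset_polyhedron_iff (hA : ∀ j, ‖A j‖ = 1) {x : E} {r : ℝ} (hr : 0 ≤ r) :
    closedBall x r ⊆ polyhedron A c ↔ ∀ j, ⟪A j, x⟫ + r ≤ c j := by
  constructor
  · intro h j
    have hmem : x + r • A j ∈ closedBall x r := by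
      simp [norm_smul, hA j, abs_of_nonneg hr]
    simpa [inner_add_right, real_inner_smul_right, real_inner_self_eq_norm_sq, hA j]
      using h hmem j
  · intro h y hy j
    have hle : ⟪A j, y - x⟫ ≤ r := by
      calc ⟪A j, y - x⟫ ≤ ‖A j‖ * ‖y - x‖ := real_inner_le_norm _ _
        _ ≤ r := by rw [hA j, one_mul, ← dist_eq_norm]; exact hy
    rw [inner_sub_right] at hle
    linarith [h j]

lemma exists_pos_add_smul_mem_polyhedron [Finite ι] {z d : E} (hz : z ∈ polyhedron A c)
    (hd : ∀ j, ⟪A j, z⟫ = c j → ⟪A j, d⟫ ≤ 0) : ∃ s > (0 : ℝ), z + s • d ∈ polyhedron A c := by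
  have hnear : ∀ j, ∀ᶠ s in 𝓝[>] (0 : ℝ), ⟪A j, z + s • d⟫ ≤ c j := by
    intro j
    rcases (hz j).eq_or_lt with hj | hj
    · filter_upwards [self_mem_nhdsWithin] with s hs
      rw [inner_add_right, real_inner_smul_right, hj]
      nlinarith [hd j hj, (show (0 : ℝ) < s from hs)]
    · have hcont : ContinuousAt (fun s : ℝ => ⟪A j, z + s • d⟫) 0 := by fun_prop
      have hlt : ∀ᶠ s in 𝓝 (0 : ℝ), ⟪A j, z + s • d⟫ < c j :=
        hcont.eventually_lt continuousAt_const (by simpa using hj)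
      exact (eventually_nhdsWithin_of_eventually_nhds hlt).mono fun _ hs => hs.le
  obtain ⟨s, hmem, hs⟩ := ((eventually_all.mpr hnear).and self_mem_nhdsWithin).exists
  exact ⟨s, hs, hmem⟩

lemma exists_active_inner_pos_of_forall_inner_le [Finite ι] {v z : E} (hv : v ≠ 0)
    (hz : z ∈ polyhedron A c) (hmax : ∀ x ∈ polyhedron A c, ⟪v, x⟫ ≤ ⟪v, z⟫) :
    ∃ j, ⟪A j, z⟫ = c j ∧ 0 < ⟪A j, v⟫ := by
  by_contra! hnone
  obtain ⟨s, hs, hmem⟩ := exists_pos_add_smul_mem_polyhedron hz hnone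
  have hvv : 0 < ⟪v, v⟫ := real_inner_self_pos.mpr hv
  have := hmax _ hmem
  rw [inner_add_right, real_inner_smul_right] at this
  nlinarith

/-- The tangent cone at a unique maximizer `p` is again a polyhedron, on whose unit vectors `v`
is negative; compactness of the unit sphere makes this negativity uniform. -/
lemma exists_inner_sub_le_neg_mul_norm [Finite ι] [FiniteDimensional ℝ E] {v p : E}
    (hp : p ∈ polyhedron A c) (hmax : ∀ x ∈ polyhedron A c, x ≠ p → ⟪v, x⟫ < ⟪v, p⟫) :
    ∃ ε > 0, ∀ x ∈ polyhedron A c, ⟪v, x - p⟫ ≤ -ε * ‖x - p‖ := by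
  set C := polyhedron (fun j : {j // ⟪A j, p⟫ = c j} => A j) 0
  have hsub : ∀ x ∈ polyhedron A c, x - p ∈ C := fun x hx j => by
    change ⟪A j, x - p⟫ ≤ 0
    rw [inner_sub_right, j.2]; linarith [hx j]
  have hneg : ∀ d ∈ C ∩ sphere 0 1, 0 < -⟪v, d⟫ := by
    rintro d ⟨hdC, hd1⟩
    have hd0 : d ≠ 0 := ne_zero_of_mem_unit_sphere ⟨d, hd1⟩
    obtain ⟨s, hs, hmem⟩ := exists_pos_add_smul_mem_polyhedron hp fun j hj => hdC ⟨j, hj⟩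
    have := hmax _ hmem (by simpa [hs.ne'] using hd0)
    rw [inner_add_right, real_inner_smul_right] at this
    nlinarith
  have hcompact : IsCompact (C ∩ sphere 0 1) :=
    (isCompact_sphere 0 1).inter_left (isClosed_polyhedron _ _)
  obtain ⟨ε, hε, hle⟩ := hcompact.exists_forall_le' (by fun_prop) hneg
  refine ⟨ε, hε, fun x hx => ?_⟩
  rcases eq_or_ne x p with rfl | hxp
  · simp
  have hnorm : 0 < ‖x - p‖ := norm_pos_iff.mpr (sub_ne_zero.mpr hxp)
  have hunit : ‖x - p‖⁻¹ • (x - p) ∈ C ∩ sphere 0 1 := by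
    refine ⟨fun j => ?_, by simp [norm_smul, hnorm.ne']⟩
    rw [real_inner_smul_right]
    exact mul_nonpos_of_nonneg_of_nonpos (inv_nonneg.mpr hnorm.le) (hsub x hx j)
  have := hle _ hunit
  rw [real_inner_smul_right] at this
  have := mul_le_mul_of_nonneg_left this hnorm.le
  rw [mul_neg, ← mul_assoc, mul_inv_cancel₀ hnorm.ne', one_mul] at this
  linarith

end Polyhedron

section Plane

variable {E : Type*} [NormedAddCommGroup E] [InnerProductSpace ℝ E] [Fact (finrank ℝ E = 2)]

lemma eq_of_inner_eq_zero_of_inner_pos {e u a : E} (he : e ≠ 0) (hu : ‖u‖ = 1) (ha : ‖a‖ = 1)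
    (hue : ⟪e, u⟫ = 0) (hae : ⟪e, a⟫ = 0) (hua : 0 < ⟪u, a⟫) : u = a := by
  have hu0 : u ≠ 0 := by rintro rfl; simp at hu
  obtain ⟨r, rfl⟩ := Submodule.mem_span_singleton.mp
    (Submodule.mem_span_singleton_of_inner_eq_zero_of_inner_eq_zero he hu0 hae hue)
  rw [norm_smul, hu, mul_one, Real.norm_eq_abs] at ha
  rw [real_inner_smul_right, real_inner_self_eq_norm_sq, hu] at hua
  rw [(abs_eq_self.mpr (by linarith)).symm.trans ha, one_smul]

variable {ι : Type*} [Finite ι] {A : ι → E} {c : ι → ℝ}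

/-- Some row active at the midpoint of `p` and `p'` has positive inner product with `v`; it is
active at `p` and `p'` too, hence orthogonal to `p - p'` like `v`, and in the plane this forces it
to be `v`. -/
lemma exists_row_eq_of_two_maximizers (hA : ∀ j, ‖A j‖ = 1) {v p p' : E} (hv : ‖v‖ = 1)
    (hp : p ∈ polyhedron A c) (hp' : p' ∈ polyhedron A c) (hne : p ≠ p')
    (heq : ⟪v, p'⟫ = ⟪v, p⟫) (hmax : ∀ x ∈ polyhedron A c, ⟪v, x⟫ ≤ ⟪v, p⟫) :
    ∃ j, A j = v ∧ ⟪A j, p⟫ = c j := by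
  set z : E := (2 : ℝ)⁻¹ • (p + p')
  have hinner : ∀ w : E, ⟪w, z⟫ = (⟪w, p⟫ + ⟪w, p'⟫) / 2 := fun w => by
    rw [real_inner_smul_right, inner_add_right]; ring
  have hz : z ∈ polyhedron A c := fun j => by rw [hinner]; linarith [hp j, hp' j]
  have hzmax : ∀ x ∈ polyhedron A c, ⟪v, x⟫ ≤ ⟪v, z⟫ := fun x hx => by
    rw [hinner, heq]; linarith [hmax x hx]
  obtain ⟨j, hjz, hjv⟩ :=
    exists_active_inner_pos_of_forall_inner_le (by rintro rfl; simp at hv) hz hzmax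
  rw [hinner] at hjz
  have hjp : ⟪A j, p⟫ = c j := by linarith [hp j, hp' j]
  have hjp' : ⟪A j, p'⟫ = c j := by linarith [hp j, hp' j]
  refine ⟨j, eq_of_inner_eq_zero_of_inner_pos (sub_ne_zero.mpr hne) (hA j) hv ?_ ?_ hjv, hjp⟩
  · rw [real_inner_comm, inner_sub_right, hjp, hjp', sub_self]
  · rw [real_inner_comm, inner_sub_right, heq, sub_self]

lemma row_eq_or_exists_inner_sub_le_neg_mul_norm (hA : ∀ j, ‖A j‖ = 1) {v p : E}
    (hv : ‖v‖ = 1) (hp : p ∈ polyhedron A c) (hmax : ∀ x ∈ polyhedron A c, ⟪v, x⟫ ≤ ⟪v, p⟫) :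
    (∃ j, A j = v ∧ ⟪A j, p⟫ = c j) ∨
      ∃ ε > 0, ∀ x ∈ polyhedron A c, ⟪v, x - p⟫ ≤ -ε * ‖x - p‖ := by
  have : FiniteDimensional ℝ E := .of_fact_finrank_eq_succ 1
  by_cases htwo : ∃ p' ∈ polyhedron A c, p ≠ p' ∧ ⟪v, p'⟫ = ⟪v, p⟫
  · obtain ⟨p', hp', hne, heq⟩ := htwo
    exact .inl (exists_row_eq_of_two_maximizers hA hv hp hp' hne heq hmax)
  · push Not at htwo
    refine .inr (exists_inner_sub_le_neg_mul_norm hp fun x hx hxp => ?_)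
    exact (hmax x hx).lt_of_ne (htwo x hx (Ne.symm hxp))

end Plane

section InnerProductSpace

variable {E : Type*} [NormedAddCommGroup E] [InnerProductSpace ℝ E]

/-- Rotating `v` by a small angle `s` towards `w` multiplies `⟪v, d⟫` by `cos s < 1` and adds
`sin s * ⟪w, d⟫ ≤ 0`, while `‖u - v‖ ^ 2 = 2 - 2 * cos s ≤ s ^ 2`. -/
lemma exists_norm_sub_le_inner_lt_of_inner_eq_zero {v w d : E} (hv : ‖v‖ = 1) (hw : ‖w‖ = 1)
    (hvw : ⟪v, w⟫ = 0) (hwd : ⟪w, d⟫ ≤ 0) (hvd : 0 < ⟪v, d⟫) {δ : ℝ} (hδ : 0 < δ) :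
    ∃ u : E, ‖u‖ = 1 ∧ ‖u - v‖ ≤ δ ∧ ⟪u, d⟫ < ⟪v, d⟫ := by
  set s := min δ 1
  have hs : 0 < s := lt_min hδ one_pos
  have hsπ : s ≤ Real.pi := (min_le_right _ _).trans (by linarith [Real.pi_gt_three])
  have hcos_lt : Real.cos s < 1 := by
    simpa using Real.cos_lt_cos_of_nonneg_of_le_pi le_rfl hsπ hs
  have hcos_ge : 1 - s ^ 2 / 2 ≤ Real.cos s := Real.one_sub_sq_div_two_le_cos
  have hsin : 0 ≤ Real.sin s := Real.sin_nonneg_of_nonneg_of_le_pi hs.le hsπ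
  have hpyth := Real.sin_sq_add_cos_sq s
  have hsq : ∀ a b : ℝ, ‖a • v + b • w‖ ^ 2 = a ^ 2 + b ^ 2 := fun a b => by
    rw [norm_add_sq_real, norm_smul, norm_smul, real_inner_smul_left, real_inner_smul_right,
      hvw, hv, hw, Real.norm_eq_abs, Real.norm_eq_abs]
    simp [sq_abs]
  refine ⟨Real.cos s • v + Real.sin s • w, ?_, ?_, ?_⟩
  · have := hsq (Real.cos s) (Real.sin s)
    rw [← sq_eq_sq₀ (norm_nonneg _) zero_le_one]
    linarith
  · have hdiff : Real.cos s • v + Real.sin s • w - v = (Real.cos s - 1) • v + Real.sin s • w := by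
      rw [sub_smul, one_smul]; abel
    rw [← pow_le_pow_iff_left₀ (norm_nonneg _) hδ.le two_ne_zero, hdiff, hsq]
    have : s ^ 2 ≤ δ ^ 2 := pow_le_pow_left₀ hs.le (min_le_left _ _) 2
    nlinarith
  · rw [inner_add_left, real_inner_smul_left, real_inner_smul_left]
    nlinarith [mul_nonpos_of_nonneg_of_nonpos hsin hwd]

lemma exists_norm_sub_le_inner_lt [Fact (finrank ℝ E = 2)] {v d : E} (hv : ‖v‖ = 1)
    (hvd : 0 < ⟪v, d⟫) {δ : ℝ} (hδ : 0 < δ) :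
    ∃ u : E, ‖u‖ = 1 ∧ ‖u - v‖ ≤ δ ∧ ⟪u, d⟫ < ⟪v, d⟫ := by
  have hv0 : v ≠ 0 := by rintro rfl; simp at hv
  have hrank := Submodule.finrank_orthogonal_span_singleton (𝕜 := ℝ) (n := 1) hv0
  obtain ⟨w, hw, hw0⟩ := Submodule.exists_mem_ne_zero_of_ne_bot (p := (ℝ ∙ v)ᗮ)
    (by rintro h; rw [h] at hrank; simp at hrank)
  have hvw : ⟪v, w⟫ = 0 := Submodule.mem_orthogonal_singleton_iff_inner_right.mp hw
  set w₁ := ‖w‖⁻¹ • w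
  have hw₁ : ‖w₁‖ = 1 := norm_smul_inv_norm hw0
  have hvw₁ : ⟪v, w₁⟫ = 0 := by rw [real_inner_smul_right, hvw, mul_zero]
  rcases le_total ⟪w₁, d⟫ 0 with hwd | hwd
  · exact exists_norm_sub_le_inner_lt_of_inner_eq_zero hv hw₁ hvw₁ hwd hvd hδ
  · refine exists_norm_sub_le_inner_lt_of_inner_eq_zero hv (by rwa [norm_neg]) ?_ ?_ hvd hδ
    · rw [inner_neg_right, hvw₁, neg_zero]
    · rw [inner_neg_left]; linarith

lemma inner_le_inner_of_norm_sub_le {K : Set E} {v p u : E} {ε : ℝ}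
    (hsharp : ∀ x ∈ K, ⟪v, x - p⟫ ≤ -ε * ‖x - p‖) (huv : ‖u - v‖ ≤ ε) :
    ∀ x ∈ K, ⟪u, x⟫ ≤ ⟪u, p⟫ := by
  intro x hx
  have hsplit : ⟪u, x - p⟫ = ⟪v, x - p⟫ + ⟪u - v, x - p⟫ := by rw [inner_sub_left]; ring
  have hcs : ⟪u - v, x - p⟫ ≤ ε * ‖x - p‖ :=
    (real_inner_le_norm _ _).trans (mul_le_mul_of_nonneg_right huv (norm_nonneg _))
  have : ⟪u, x - p⟫ ≤ 0 := by linarith [hsharp x hx]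
  rwa [inner_sub_right, sub_nonpos] at this

lemma exists_mem_inner_lt_of_mem_interior {K : Set E} {x v : E} (hx : x ∈ interior K)
    (hv : v ≠ 0) : ∃ y ∈ K, ⟪v, x⟫ < ⟪v, y⟫ := by
  have hnear : ∀ᶠ s in 𝓝 (0 : ℝ), x + s • v ∈ K :=
    (show ContinuousAt (fun s : ℝ => x + s • v) 0 by fun_prop).preimage_mem_nhds
      (by simpa using mem_interior_iff_mem_nhds.mp hx)
  obtain ⟨s, hs, hpos⟩ :=
    ((eventually_nhdsWithin_of_eventually_nhds hnear).and self_mem_nhdsWithin).exists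
      (f := 𝓝[>] (0 : ℝ))
  refine ⟨_, hs, ?_⟩
  rw [inner_add_right, real_inner_smul_right]
  have : 0 < ⟪v, v⟫ := real_inner_self_pos.mpr hv
  nlinarith [show (0 : ℝ) < s from hpos]

end InnerProductSpace

section Width

local notation "ℝ²" => EuclideanSpace ℝ (Fin 2)

local instance : Fact (finrank ℝ ℝ² = 2) := ⟨finrank_euclideanSpace_fin⟩

lemma dirWidth_neg (v : ℝ²) (K : Set ℝ²) : dirWidth (-v) K = dirWidth v K := by
  have himage : (fun x => ⟪-v, x⟫) '' K = -((fun x => ⟪v, x⟫) '' K) := by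
    simp_rw [inner_neg_left, ← image_neg_eq_neg, image_image]
  rw [dirWidth, dirWidth, himage, Real.sSup_neg, Real.sInf_neg]
  ring

lemma dirWidth_eq_inner_sub {K : Set ℝ²} {v p q : ℝ²} (hp : p ∈ K) (hq : q ∈ K)
    (hmax : ∀ x ∈ K, ⟪v, x⟫ ≤ ⟪v, p⟫) (hmin : ∀ x ∈ K, ⟪v, q⟫ ≤ ⟪v, x⟫) :
    dirWidth v K = ⟪v, p - q⟫ := by
  rw [dirWidth, inner_sub_right,
    IsGreatest.csSup_eq ⟨mem_image_of_mem _ hp, forall_mem_image.2 hmax⟩,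
    IsLeast.csInf_eq ⟨mem_image_of_mem _ hq, forall_mem_image.2 hmin⟩]

lemma exists_isLeast_dirWidth {K : Set ℝ²} (hK : IsCompact K) :
    ∃ v : ℝ², ‖v‖ = 1 ∧
      IsLeast {w | ∃ u : ℝ², ‖u‖ = 1 ∧ w = dirWidth u K} (dirWidth v K) := by
  have hcont : Continuous fun v : ℝ² => dirWidth v K :=
    (hK.continuous_sSup continuous_inner).sub (hK.continuous_sInf continuous_inner)
  obtain ⟨v, hv, hmin⟩ := (isCompact_sphere (0 : ℝ²) 1).exists_isMinOn
    (NormedSpace.sphere_nonempty.mpr zero_le_one) hcont.continuousOn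
  rw [mem_sphere_zero_iff_norm] at hv
  refine ⟨v, hv, ⟨v, hv, rfl⟩, ?_⟩
  rintro _ ⟨u, hu, rfl⟩
  exact hmin (mem_sphere_zero_iff_norm.mpr hu)

lemma exists_dirWidth_lt_of_sharp {K : Set ℝ²} {v p q : ℝ²} {ε₁ ε₂ : ℝ} (hv : ‖v‖ = 1)
    (hp : p ∈ K) (hq : q ∈ K) (hpq : ⟪v, q⟫ < ⟪v, p⟫) (hε₁ : 0 < ε₁) (hε₂ : 0 < ε₂)
    (hsharp_p : ∀ x ∈ K, ⟪v, x - p⟫ ≤ -ε₁ * ‖x - p‖)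
    (hsharp_q : ∀ x ∈ K, ⟪-v, x - q⟫ ≤ -ε₂ * ‖x - q‖) :
    ∃ u : ℝ², ‖u‖ = 1 ∧ dirWidth u K < dirWidth v K := by
  have hwidth : ∀ u : ℝ², ‖u - v‖ ≤ min ε₁ ε₂ → dirWidth u K = ⟪u, p - q⟫ := by
    intro u hu
    refine dirWidth_eq_inner_sub hp hq
      (inner_le_inner_of_norm_sub_le hsharp_p (hu.trans (min_le_left _ _))) fun x hx => ?_
    have hu' : ‖-u - -v‖ ≤ ε₂ := by
      rw [neg_sub_neg, norm_sub_rev]; exact hu.trans (min_le_right _ _)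
    simpa [inner_neg_left] using inner_le_inner_of_norm_sub_le hsharp_q hu' x hx
  obtain ⟨u, hu, huv, hlt⟩ := exists_norm_sub_le_inner_lt hv (d := p - q)
    (by rw [inner_sub_right]; linarith) (lt_min hε₁ hε₂)
  refine ⟨u, hu, ?_⟩
  rwa [hwidth u huv, hwidth v (by simp [hε₁.le, hε₂.le])]

theorem exists_row_setWidth_eq_dirWidth {ι : Type*} [Finite ι] {A : ι → ℝ²} {c : ι → ℝ}
    (hA : ∀ j, ‖A j‖ = 1) (hK : IsCompact (polyhedron A c))
    (hint : (interior (polyhedron A c)).Nonempty) :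
    ∃ j, (∃ z ∈ polyhedron A c, ⟪A j, z⟫ = c j) ∧
      setWidth (polyhedron A c) = dirWidth (A j) (polyhedron A c) := by
  set K := polyhedron A c
  obtain ⟨v, hv, hleast⟩ := exists_isLeast_dirWidth hK
  have hwidth : setWidth K = dirWidth v K := hleast.csInf_eq
  have hcont : Continuous fun x : ℝ² => ⟪v, x⟫ := by fun_prop
  obtain ⟨p, hp, hpmax⟩ := hK.exists_isMaxOn (hint.mono interior_subset) hcont.continuousOn
  obtain ⟨q, hq, hqmin⟩ := hK.exists_isMinOn (hint.mono interior_subset) hcont.continuousOn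
  obtain ⟨x₀, hx₀⟩ := hint
  obtain ⟨y, hy, hx₀y⟩ := exists_mem_inner_lt_of_mem_interior hx₀ (v := v) (by
    rintro rfl; simp at hv)
  have hpq : ⟪v, q⟫ < ⟪v, p⟫ := (hqmin (interior_subset hx₀)).trans_lt (hx₀y.trans_le (hpmax hy))
  rcases row_eq_or_exists_inner_sub_le_neg_mul_norm hA hv hp (fun x hx => hpmax hx) with
    ⟨j, rfl, hjp⟩ | ⟨ε₁, hε₁, hsharp_p⟩
  · exact ⟨j, ⟨p, hp, hjp⟩, hwidth⟩
  rcases row_eq_or_exists_inner_sub_le_neg_mul_norm hA (v := -v) (by rwa [norm_neg]) hq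
      (fun x hx => by simpa [inner_neg_left] using hqmin hx) with
    ⟨j, hj, hjq⟩ | ⟨ε₂, hε₂, hsharp_q⟩
  · exact ⟨j, ⟨q, hq, hjq⟩, by rw [hwidth, hj, dirWidth_neg]⟩
  obtain ⟨u, hu, hlt⟩ := exists_dirWidth_lt_of_sharp hv hp hq hpq hε₁ hε₂ hsharp_p hsharp_q
  exact absurd (hleast.2 ⟨u, hu, rfl⟩) hlt.not_ge

lemma exists_closedBall_subset_of_lt_inradius {P : Set ℝ²} {t : ℝ} (ht : t < inradius P) :
    ∃ x r, t < r ∧ closedBall x r ⊆ P := by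
  have hne : {r : ℝ | ∃ x, closedBall x r ⊆ P}.Nonempty := ⟨-1, 0, by simp⟩
  obtain ⟨r, ⟨x, hx⟩, htr⟩ := exists_lt_of_lt_csSup hne ht
  exact ⟨x, r, htr, hx⟩

lemma innerParallel_polyhedron {ι : Type*} {A : ι → ℝ²} {b : ι → ℝ} (hA : ∀ j, ‖A j‖ = 1)
    {t : ℝ} (ht : 0 ≤ t) :
    innerParallel (polyhedron A b) t = polyhedron A (fun j => b j - t) := by
  ext x
  simp only [innerParallel, mem_ofPred_eq, closedBall_subset_polyhedron_iff hA ht,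
    mem_polyhedron, le_sub_iff_add_le]
  exact ⟨fun h => h.2, fun h => ⟨fun j => by linarith [h j], h⟩⟩

end Width

theorem width_attained_at_active_row_general {m : ℕ}
    (A : Fin m → EuclideanSpace ℝ (Fin 2)) (b : Fin m → ℝ)
    (hA : ∀ i, ‖A i‖ = 1)
    (hbdd : Bornology.IsBounded {x | ∀ i, ⟪A i, x⟫ ≤ b i})
    (M : Fin m → ℝ)
    (hM : ∀ i, IsGreatest
      {t : ℝ | 0 ≤ t ∧ ∃ x, (∀ j, ⟪A j, x⟫ ≤ b j - t) ∧ ⟪A i, x⟫ = b i - t} (M i)) :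
    ∀ t : ℝ, 0 ≤ t → t < inradius {x | ∀ j, ⟪A j, x⟫ ≤ b j} →
      ∃ i : Fin m, t ≤ M i ∧
        setWidth (innerParallel {x | ∀ j, ⟪A j, x⟫ ≤ b j} t) =
          dirWidth (A i) (innerParallel {x | ∀ j, ⟪A j, x⟫ ≤ b j} t) := by
  intro t ht htr
  set K := polyhedron A (fun j => b j - t)
  have hK : innerParallel {x | ∀ j, ⟪A j, x⟫ ≤ b j} t = K := innerParallel_polyhedron hA ht
  obtain ⟨x₀, r, htr, hball⟩ := exists_closedBall_subset_of_lt_inradius htr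
  have hballK : closedBall x₀ (r - t) ⊆ K := by
    rw [closedBall_subset_polyhedron_iff hA (by linarith)]
    intro j
    linarith [(closedBall_subset_polyhedron_iff hA (by linarith)).mp hball j]
  have hint : x₀ ∈ interior K :=
    mem_interior_iff_mem_nhds.mpr (mem_of_superset (closedBall_mem_nhds x₀ (by linarith)) hballK)
  have hcompact : IsCompact K := isCompact_of_isClosed_isBounded (isClosed_polyhedron _ _)
    (hbdd.subset (polyhedron_mono fun j => by linarith))
  obtain ⟨i, ⟨z, hz, hzi⟩, hwidth⟩ := exists_row_setWidth_eq_dirWidth hA hcompact ⟨x₀, hint⟩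
  exact ⟨i, (hM i).2 ⟨ht, z, hz, hzi⟩, by rwa [hK]⟩

/-- For a convex polygon `P = {x : Ax ≤ b} ⊆ ℝ²` with nonempty interior, unit-norm rows and
every row defining an edge, with `r = I(P)` and
`M_i = max {t ≥ 0 : ∃ x, Ax ≤ b − t·𝟙 and A_i·x = b_i − t}`: for every `0 ≤ t < r` there is
an index `i` with `M_i ≥ t` such that the width of `interior_t P` is attained in the
direction `A_i`. -/
theorem width_attained_at_active_row {m : ℕ}
    (A : Fin m → EuclideanSpace ℝ (Fin 2)) (b : Fin m → ℝ)
    (hA : ∀ i, ‖A i‖ = 1)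
    (hbdd : Bornology.IsBounded {x | ∀ i, ⟪A i, x⟫ ≤ b i})
    (hint : (interior {x | ∀ i, ⟪A i, x⟫ ≤ b i}).Nonempty)
    (hedge : ∀ i, Module.finrank ℝ
      (vectorSpan ℝ {x ∈ {x | ∀ j, ⟪A j, x⟫ ≤ b j} | ⟪A i, x⟫ = b i}) = 1)
    (M : Fin m → ℝ)
    (hM : ∀ i, IsGreatest
      {t : ℝ | 0 ≤ t ∧ ∃ x, (∀ j, ⟪A j, x⟫ ≤ b j - t) ∧ ⟪A i, x⟫ = b i - t} (M i)) :
    ∀ t : ℝ, 0 ≤ t → t < inradius {x | ∀ j, ⟪A j, x⟫ ≤ b j} →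
      ∃ i : Fin m, t ≤ M i ∧
        setWidth (innerParallel {x | ∀ j, ⟪A j, x⟫ ≤ b j} t) =
          dirWidth (A i) (innerParallel {x | ∀ j, ⟪A j, x⟫ ≤ b j} t) :=
  width_attained_at_active_row_general A b hA hbdd M hM
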